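/- In ℝⁿ with the setup below, let μ₁,…,μₙ be real numbers, μ = Σⱼ μⱼ·εⱼ, and δₖ = Σᵢ(n−i)εᵢ. Set P := ∏_{α ∈ Δ⁺} B(μ + δₖ, α) and Pₖ := ∏_{α ∈ Δ⁺ₗ} B(δₖ, α). Then P/Pₖ = (1/(2(2n−1)))ⁿ · ∏_{i=1}^{n}(μᵢ + n − i) · ∏_{1 ≤ i < j ≤ n} [(μᵢ + μⱼ + 2n − i − j)(μᵢ − μⱼ − i + j)] / [(2n − i − j)(j − i)]. (This ratio is the combinatorial factor in the Barbasch–Moscovici L²-index formula Index 𝔇_{μ,Γ} = Vol(Γ\G)·P/Pₖ for the twisted Dirac operator on Γ\SO₁(2n,1)/SO(2n).) -/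

import Mathlib

open scoped BigOperators

noncomputable section

/-- The standard basis vector `εᵢ` of `ℝⁿ` (here `i : Fin n` corresponds to the
1-based index `i+1`). -/
def eps (n : ℕ) (i : Fin n) : Fin n → ℝ := Pi.single i 1

/-- The bilinear form `B(x,y) = (∑ᵢ xᵢ yᵢ) / (2(2n−1))`. -/
def B (n : ℕ) (x y : Fin n → ℝ) : ℝ := (∑ i, x i * y i) / (2 * (2 * (n : ℝ) - 1))

/-- The set of pairs `(i,j)` with `i < j`. -/
def pairs (n : ℕ) : Finset (Fin n × Fin n) := Finset.univ.filter (fun p => p.1 < p.2)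

/-- The noncompact positive roots `Δ⁺ₙ = {εᵢ : 1 ≤ i ≤ n}`. -/
def PosNC (n : ℕ) : Finset (Fin n → ℝ) := Finset.univ.image (eps n)

/-- The compact positive roots `Δ⁺ₗ = {εᵢ − εⱼ, εᵢ + εⱼ : 1 ≤ i < j ≤ n}`. -/
def PosC (n : ℕ) : Finset (Fin n → ℝ) :=
  (pairs n).image (fun p => eps n p.1 - eps n p.2) ∪
  (pairs n).image (fun p => eps n p.1 + eps n p.2)

/-- All positive roots `Δ⁺ = Δ⁺ₙ ∪ Δ⁺ₗ`. -/
def Pos (n : ℕ) : Finset (Fin n → ℝ) := PosNC n ∪ PosC n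

/-- `δₖ = Σᵢ (n − i) εᵢ` (1-based `i`). -/
def deltaK (n : ℕ) : Fin n → ℝ := ∑ i : Fin n, ((n : ℝ) - ((i.val : ℝ) + 1)) • eps n i

/-- `δₙ = (1/2) Σᵢ εᵢ`. -/
def deltaN (n : ℕ) : Fin n → ℝ := ∑ i, (1 / 2 : ℝ) • eps n i

/-- The vector `μ = Σⱼ μⱼ εⱼ` associated with coefficients `μ : Fin n → ℝ`. -/
def vec (n : ℕ) (μ : Fin n → ℝ) : Fin n → ℝ := ∑ j, μ j • eps n j

/-! Each positive root is `εᵢ` or `εᵢ ± εⱼ`, so `B(x, α)` is `xᵢ` or `xᵢ ± xⱼ` divided by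
`2(2n−1)`. The factor `2(2n−1)` appears `n + 2·#pairs` times in `P` and `2·#pairs` times in `Pₖ`,
so the ratio keeps `(2(2n−1))⁻ⁿ`, and the remaining factors pair up root by root. -/

section Roots

variable {n : ℕ}

lemma eps_apply (i j : Fin n) : eps n i j = if j = i then 1 else 0 :=
  Pi.single_apply i 1 j

lemma sum_eps (i : Fin n) : ∑ k, eps n i k = 1 := by
  simp [eps_apply]

lemma mem_pairs {p : Fin n × Fin n} : p ∈ pairs n ↔ p.1 < p.2 := by
  simp [pairs]

lemma injOn_eps_sub_eps : Set.InjOn (fun p : Fin n × Fin n => eps n p.1 - eps n p.2) (pairs n) := by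
  rintro ⟨i, j⟩ hij ⟨k, l⟩ - h
  have hij : i < j := mem_pairs.1 hij
  simp only [eps, sub_eq_add_neg, ← Pi.single_neg] at h
  rcases (Pi.single_add_single_eq_single_add_single one_ne_zero (neg_ne_zero.2 one_ne_zero)).1 h
    with ⟨rfl, rfl⟩ | ⟨h, -⟩ | ⟨-, rfl, -⟩
  · rfl
  · norm_num at h
  · exact absurd hij (lt_irrefl i)

lemma injOn_eps_add_eps : Set.InjOn (fun p : Fin n × Fin n => eps n p.1 + eps n p.2) (pairs n) := by
  rintro ⟨i, j⟩ hij ⟨k, l⟩ hkl h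
  have hij : i < j := mem_pairs.1 hij
  have hkl : k < l := mem_pairs.1 hkl
  rcases (Pi.single_add_single_eq_single_add_single one_ne_zero one_ne_zero).1 h
    with ⟨rfl, rfl⟩ | ⟨-, rfl, rfl⟩ | ⟨h, -⟩
  · rfl
  · exact absurd (hij.trans hkl) (lt_irrefl i)
  · norm_num at h

lemma sum_apply_eq_of_mem_image_eps_sub_eps {α : Fin n → ℝ}
    (h : α ∈ (pairs n).image (fun p => eps n p.1 - eps n p.2)) : ∑ k, α k = 0 := by
  obtain ⟨p, -, rfl⟩ := Finset.mem_image.1 h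
  simp [Finset.sum_sub_distrib, sum_eps]

lemma sum_apply_eq_of_mem_image_eps_add_eps {α : Fin n → ℝ}
    (h : α ∈ (pairs n).image (fun p => eps n p.1 + eps n p.2)) : ∑ k, α k = 2 := by
  obtain ⟨p, -, rfl⟩ := Finset.mem_image.1 h
  norm_num [Finset.sum_add_distrib, sum_eps]

lemma disjoint_image_eps_sub_eps_image_eps_add_eps :
    Disjoint ((pairs n).image (fun p => eps n p.1 - eps n p.2))
      ((pairs n).image (fun p => eps n p.1 + eps n p.2)) :=
  Finset.disjoint_left.2 fun _ hsub hadd => by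
    have := (sum_apply_eq_of_mem_image_eps_sub_eps hsub).symm.trans
      (sum_apply_eq_of_mem_image_eps_add_eps hadd)
    norm_num at this

lemma disjoint_PosNC_PosC : Disjoint (PosNC n) (PosC n) := by
  refine Finset.disjoint_left.2 fun α hNC hC => ?_
  obtain ⟨i, -, rfl⟩ := Finset.mem_image.1 hNC
  rcases Finset.mem_union.1 hC with hsub | hadd
  · have := (sum_eps i).symm.trans (sum_apply_eq_of_mem_image_eps_sub_eps hsub)
    norm_num at this
  · have := (sum_eps i).symm.trans (sum_apply_eq_of_mem_image_eps_add_eps hadd)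
    norm_num at this

lemma eps_injective : Function.Injective (eps n) := fun i j h => by
  simpa [eps_apply, eq_comm] using congrFun h i

lemma prod_PosC {M : Type*} [CommMonoid M] (f : (Fin n → ℝ) → M) :
    ∏ α ∈ PosC n, f α = ∏ p ∈ pairs n, f (eps n p.1 - eps n p.2) * f (eps n p.1 + eps n p.2) := by
  rw [PosC, Finset.prod_union disjoint_image_eps_sub_eps_image_eps_add_eps,
    Finset.prod_image injOn_eps_sub_eps, Finset.prod_image injOn_eps_add_eps,
    Finset.prod_mul_distrib]

lemma prod_Pos {M : Type*} [CommMonoid M] (f : (Fin n → ℝ) → M) :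
    ∏ α ∈ Pos n, f α = (∏ i, f (eps n i)) * ∏ α ∈ PosC n, f α := by
  rw [Pos, Finset.prod_union disjoint_PosNC_PosC, PosNC,
    Finset.prod_image eps_injective.injOn]

end Roots

lemma two_mul_two_mul_sub_one_ne_zero (n : ℕ) : 2 * (2 * (n : ℝ) - 1) ≠ 0 :=
  mul_ne_zero two_ne_zero (sub_ne_zero.2 (by exact_mod_cast (by omega : 2 * n ≠ 1)))

section Form

variable {n : ℕ}

lemma B_eps (x : Fin n → ℝ) (i : Fin n) : B n x (eps n i) = x i / (2 * (2 * (n : ℝ) - 1)) := by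
  simp [B, eps_apply]

lemma B_add_right (x u v : Fin n → ℝ) : B n x (u + v) = B n x u + B n x v := by
  simp only [B, Pi.add_apply, mul_add, Finset.sum_add_distrib, add_div]

lemma B_sub_right (x u v : Fin n → ℝ) : B n x (u - v) = B n x u - B n x v := by
  simp only [B, Pi.sub_apply, mul_sub, Finset.sum_sub_distrib, sub_div]

lemma B_eps_sub_eps (x : Fin n → ℝ) (i j : Fin n) :
    B n x (eps n i - eps n j) = (x i - x j) / (2 * (2 * (n : ℝ) - 1)) := by
  rw [B_sub_right, B_eps, B_eps, sub_div]

lemma B_eps_add_eps (x : Fin n → ℝ) (i j : Fin n) :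
    B n x (eps n i + eps n j) = (x i + x j) / (2 * (2 * (n : ℝ) - 1)) := by
  rw [B_add_right, B_eps, B_eps, add_div]

lemma prod_Pos_B_div_prod_PosC_B (x d : Fin n → ℝ) :
    (∏ α ∈ Pos n, B n x α) / ∏ α ∈ PosC n, B n d α
      = (1 / (2 * (2 * (n : ℝ) - 1))) ^ n * (∏ i, x i) *
        ∏ p ∈ pairs n,
          ((x p.1 - x p.2) * (x p.1 + x p.2)) / ((d p.1 - d p.2) * (d p.1 + d p.2)) := by
  have hc := two_mul_two_mul_sub_one_ne_zero n
  rw [prod_Pos, mul_div_assoc, prod_PosC, prod_PosC, ← Finset.prod_div_distrib]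
  simp only [B_eps, B_eps_sub_eps, B_eps_add_eps]
  congr 1
  · rw [Finset.prod_div_distrib, Finset.prod_const, Finset.card_univ, Fintype.card_fin,
      one_div_pow, div_eq_inv_mul, one_div]
  · refine Finset.prod_congr rfl fun p _ => ?_
    rw [div_mul_div_comm, div_mul_div_comm, div_div_div_cancel_right₀ (mul_ne_zero hc hc)]

end Form

lemma deltaK_apply (n : ℕ) (i : Fin n) : deltaK n i = (n : ℝ) - ((i.val : ℝ) + 1) := by
  simp [deltaK, Finset.sum_apply, eps_apply]

lemma vec_apply (n : ℕ) (μ : Fin n → ℝ) (i : Fin n) : vec n μ i = μ i := by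
  simp [vec, Finset.sum_apply, eps_apply]

theorem index_ratio_P_div_Pk_general (n : ℕ) (μ : Fin n → ℝ) :
    (∏ α ∈ Pos n, B n (vec n μ + deltaK n) α) / (∏ α ∈ PosC n, B n (deltaK n) α)
      = (1 / (2 * (2 * (n : ℝ) - 1))) ^ n *
        (∏ i : Fin n, (μ i + (n : ℝ) - ((i.val : ℝ) + 1))) *
        ∏ p ∈ pairs n,
          ((μ p.1 + μ p.2 + 2 * (n : ℝ) - ((p.1.val : ℝ) + 1) - ((p.2.val : ℝ) + 1)) *
            (μ p.1 - μ p.2 - ((p.1.val : ℝ) + 1) + ((p.2.val : ℝ) + 1))) /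
          ((2 * (n : ℝ) - ((p.1.val : ℝ) + 1) - ((p.2.val : ℝ) + 1)) *
            (((p.2.val : ℝ) + 1) - ((p.1.val : ℝ) + 1))) := by
  rw [prod_Pos_B_div_prod_PosC_B]
  simp only [Pi.add_apply, vec_apply, deltaK_apply, ← add_sub_assoc]
  congr 1
  refine Finset.prod_congr rfl fun p _ => ?_
  ring

/-- the ratio `P/Pₖ` appearing in the Barbasch–Moscovici `L²`-index
formula for the twisted Dirac operator on `Γ\SO₁(2n,1)/SO(2n)` satisfies
`P/Pₖ = (1/(2(2n−1)))ⁿ · ∏ᵢ(μᵢ+n−i) ·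
∏_{i<j} [(μᵢ+μⱼ+2n−i−j)(μᵢ−μⱼ−i+j)] / [(2n−i−j)(j−i)]`. -/
theorem index_ratio_P_div_Pk (n : ℕ) (hn : 2 ≤ n) (μ : Fin n → ℝ) :
    (∏ α ∈ Pos n, B n (vec n μ + deltaK n) α) / (∏ α ∈ PosC n, B n (deltaK n) α)
      = (1 / (2 * (2 * (n : ℝ) - 1))) ^ n *
        (∏ i : Fin n, (μ i + (n : ℝ) - ((i.val : ℝ) + 1))) *
        ∏ p ∈ pairs n,
          ((μ p.1 + μ p.2 + 2 * (n : ℝ) - ((p.1.val : ℝ) + 1) - ((p.2.val : ℝ) + 1)) *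
            (μ p.1 - μ p.2 - ((p.1.val : ℝ) + 1) + ((p.2.val : ℝ) + 1))) /
          ((2 * (n : ℝ) - ((p.1.val : ℝ) + 1) - ((p.2.val : ℝ) + 1)) *
            (((p.2.val : ℝ) + 1) - ((p.1.val : ℝ) + 1))) :=
  index_ratio_P_div_Pk_general n μ
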